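/- There exists an absolute constant c > 0 such that for every integer t ≥ 1 there exists k₀(t) with the property: for every k ≥ k₀(t) there exist an integer n with n ≤ k + c·t²·log₂ k and a set C ⊆ {0,1}^n with |C| ≥ 2^k that corrects any t symmetric composition errors, i.e., for any two distinct s, v ∈ C there is no multiset D that is simultaneously the result of at most t composition errors in C(s) and the result of at most t composition errors in C(v). -/

import Mathlib

/-- The composition of a binary string: the pair (number of 0s, number of 1s).
Here `false` represents the bit 0 and `true` the bit 1. -/
def comp (w : List Bool) : ℕ × ℕ := (w.count false, w.count true)

/-- The multiset of compositions of all contiguous substrings of `s` of length `l`. -/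
def compLen (l : ℕ) (s : List Bool) : Multiset (ℕ × ℕ) :=
  ↑((List.range (s.length + 1 - l)).map fun i => comp ((s.drop i).take l))

/-- The composition multiset `C(s)`: compositions of all contiguous substrings of `s`. -/
def compMS (s : List Bool) : Multiset (ℕ × ℕ) :=
  ↑((List.range s.length).flatMap fun i =>
    (List.range (s.length - i)).map fun j => comp ((s.drop i).take (j + 1)))

/-- A single composition error: one element `(z,w)` of `M` is replaced by a
pair `(z',w')` with the same length `z'+w' = z+w`. -/
def OneErr (M M' : Multiset (ℕ × ℕ)) : Prop :=
  ∃ z w z' w' : ℕ, (z, w) ∈ M ∧ z + w = z' + w' ∧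
    M' = M - {(z, w)} + {(z', w')}

/-- `AtMostErr t M D`: `D` is obtained from `M` by at most `t` composition errors. -/
def AtMostErr : ℕ → Multiset (ℕ × ℕ) → Multiset (ℕ × ℕ) → Prop
  | 0, M, D => M = D
  | t + 1, M, D => M = D ∨ ∃ M', OneErr M M' ∧ AtMostErr t M' D

/-- The sub-multiset of elements (compositions) of length `l`. -/
def lenPart (l : ℕ) (M : Multiset (ℕ × ℕ)) : Multiset (ℕ × ℕ) :=
  M.filter fun p => p.1 + p.2 = l

/-- `D` is the result of at most `t` *asymmetric* composition errors in `C(s)`,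
for a string of length `n`: additionally, for each `1 ≤ i ≤ ⌊n/2⌋`, at most one
of the two sub-multisets of lengths `i` and `n+1-i` is altered. -/
def AsymErr (t n : ℕ) (s : List Bool) (D : Multiset (ℕ × ℕ)) : Prop :=
  AtMostErr t (compMS s) D ∧
  ∀ i, 1 ≤ i → i ≤ n / 2 →
    lenPart i D ≠ compLen i s → lenPart (n + 1 - i) D = compLen (n + 1 - i) s

/-- A Catalan-Bertrand string: every nonempty prefix has strictly more 0s than 1s. -/
def IsCB (w : List Bool) : Prop :=
  ∀ j, 1 ≤ j → j ≤ w.length → (w.take j).count true < (w.take j).count false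

/-- The reconstruction code `S_R(n)` for even `n`: `s_1 = 0`, `s_n = 1`, and the
subsequence of `s` indexed by the positions `i ∈ {1,…,n/2}` with `s_i ≠ s_{n+1-i}`
(in increasing order) is a Catalan-Bertrand string (indices here are 0-based). -/
def SReven (n : ℕ) : Set (List Bool) :=
  { s | s.length = n ∧ s.getD 0 false = false ∧ s.getD (n - 1) false = true ∧
    IsCB (((List.range (n / 2)).filter fun i =>
        s.getD i false != s.getD (n - 1 - i) false).map fun i => s.getD i false) }

/-- The reconstruction code `S_R(n)`: for odd `n`, obtained from `S_R(n-1)` by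
inserting an arbitrary middle bit. -/
def SR (n : ℕ) : Set (List Bool) :=
  if Even n then SReven n
  else { s | ∃ v ∈ SReven (n - 1), ∃ b : Bool,
      s = v.take ((n - 1) / 2) ++ [b] ++ v.drop ((n - 1) / 2) }

/-- The cumulative weight `w_l(s)`: total number of 1s over all length-`l`
contiguous substrings of `s`. -/
def cumW (l : ℕ) (s : List Bool) : ℕ :=
  ∑ i ∈ Finset.range (s.length + 1 - l), ((s.drop i).take l).count true

/-- `σ_i(s) = s_i + s_{n+1-i}` for `1 ≤ i ≤ ⌊n/2⌋`, and `σ_{⌈n/2⌉}(s) = s_{⌈n/2⌉}`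
for odd `n` (1-based indexing in the mathematical description). -/
def sigmaSeq (s : List Bool) (i : ℕ) : ℕ :=
  if 2 * i ≤ s.length then
    (if s.getD (i - 1) false then 1 else 0) +
      (if s.getD (s.length - i) false then 1 else 0)
  else (if s.getD (i - 1) false then 1 else 0)

/-!
A composition error changes the multiset only at one length, so if `C(s)` and `C(v)` are both
within `t` errors of a common `D`, their length-`l` parts agree outside a set of at most `2t`
lengths. The length-`l` part determines the first two moments `∑ wᵢ` and `∑ wᵢ²` of the weights
of the length-`l` windows; storing the power sums `∑ₗ momentₚ(l) lʲ` for `j < 2t` as a syndrome,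
a Vandermonde argument recovers the moments at every length. These determine a string among the
dominant ones (every suffix has at most as many ones as the prefix of the same length): the windows
of length `n - m` reveal the sum and the sum of squares of the prefix and suffix weights of length
`m`, and dominance says which is which. By the cycle lemma a fraction `1/(2(N+1))` of the strings
of length `2N` is dominant, and there are only `(2N)^O(t²)` syndromes, so a syndrome class of
dominant strings of length `k + O(t² log k)` is a code with `2^k` words.
-/

open Finset

section Windows

variable (s : List Bool)

def prefixOnes (m : ℕ) : ℤ := (s.take m).count true

def suffixOnes (m : ℕ) : ℤ := (s.drop (s.length - m)).count true

variable {s}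

lemma prefixOnes_add (i l : ℕ) :
    prefixOnes s (i + l) = prefixOnes s i + ((s.drop i).take l).count true := by
  simp [prefixOnes, List.take_add, List.count_append]

lemma prefixOnes_of_length_le {m : ℕ} (h : s.length ≤ m) :
    prefixOnes s m = s.count true := by
  simp [prefixOnes, List.take_of_length_le h]

lemma prefixOnes_add_suffixOnes (m : ℕ) :
    prefixOnes s (s.length - m) + suffixOnes s m = s.count true := by
  rw [prefixOnes, suffixOnes, ← Nat.cast_add, ← List.count_append, List.take_append_drop]

lemma suffixOnes_of_length_le {m : ℕ} (h : s.length ≤ m) :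
    suffixOnes s m = s.count true := by
  simp [suffixOnes, Nat.sub_eq_zero_of_le h]

lemma prefixOnes_zero : prefixOnes s 0 = 0 := by simp [prefixOnes]

lemma suffixOnes_zero : suffixOnes s 0 = 0 := by simp [suffixOnes]

lemma count_window {m a : ℕ} (hm : m ≤ s.length) (ha : a ≤ m) :
    (((s.drop a).take (s.length - m)).count true : ℤ)
      = s.count true - prefixOnes s a - suffixOnes s (m - a) := by
  have h := prefixOnes_add (s := s) a (s.length - m)
  rw [show a + (s.length - m) = s.length - (m - a) by omega] at h
  linarith [prefixOnes_add_suffixOnes (s := s) (m - a)]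

lemma eq_of_prefixOnes_eq {v : List Bool} (hlen : s.length = v.length)
    (h : ∀ m, prefixOnes s m = prefixOnes v m) : s = v := by
  refine List.ext_getElem hlen fun i hi hi' => ?_
  have hi1 := h (i + 1)
  rw [prefixOnes_add, prefixOnes_add, h i, add_right_inj, List.drop_eq_getElem_cons hi,
    List.drop_eq_getElem_cons hi'] at hi1
  revert hi1
  cases s[i] <;> cases v[i] <;> simp

end Windows

lemma comp_fst_add_snd (w : List Bool) : (comp w).1 + (comp w).2 = w.length := by
  simp [comp]

lemma List.flatMap_ite_singleton {α β : Type*} (L : List α) (p : α → Prop) [DecidablePred p]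
    (f : α → β) : L.flatMap (fun a => if p a then [f a] else []) = (L.filter p).map f := by
  induction L with
  | nil => rfl
  | cons a L ih => by_cases h : p a <;> simp [h, ih]

lemma List.range_filter_lt {n k : ℕ} (hk : k ≤ n) :
    (List.range n).filter (· < k) = List.range k := by
  induction n with
  | zero => simp_all
  | succ n ih =>
    rcases hk.lt_or_eq with hk | rfl
    · simp [List.range_succ, ih (by omega), show ¬ n < k by omega]
    · simp

lemma List.range_filter_eq (m k : ℕ) :
    (List.range m).filter (· = k) = if k < m then [k] else [] := by
  induction m with
  | zero => simp
  | succ m ih =>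
    rw [List.range_succ, List.filter_append, ih]
    grind

lemma lenPart_compMS (s : List Bool) {l : ℕ} (hl : 1 ≤ l) :
    lenPart l (compMS s) = compLen l s := by
  have hinner : ∀ i, ((List.range (s.length - i)).map
      fun j => comp ((s.drop i).take (j + 1))).filter (fun c => c.1 + c.2 = l)
      = if i < s.length + 1 - l then [comp ((s.drop i).take l)] else [] := by
    intro i
    rw [List.filter_map, List.filter_congr (q := (· = l - 1)) fun j hj => by
      simp only [List.mem_range] at hj
      simp only [Function.comp_apply, comp_fst_add_snd, List.length_take, List.length_drop]
      grind, List.range_filter_eq]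
    by_cases h : i < s.length + 1 - l
    · simp [h, show l - 1 < s.length - i by omega, Nat.sub_add_cancel hl]
    · simp [h, show ¬ l - 1 < s.length - i by omega]
  simp only [lenPart, compMS, compLen, Multiset.filter_coe, List.filter_flatMap, hinner,
    List.flatMap_ite_singleton, List.range_filter_lt (show s.length + 1 - l ≤ s.length by omega)]

def moment (p l : ℕ) (M : Multiset (ℕ × ℕ)) : ℕ := ((lenPart l M).map fun c => c.2 ^ p).sum

section Moments

variable {s : List Bool}

lemma moment_compMS (p : ℕ) {l : ℕ} (hl : 1 ≤ l) :
    moment p l (compMS s) =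
      ∑ i ∈ range (s.length + 1 - l), ((s.drop i).take l).count true ^ p := by
  rw [moment, lenPart_compMS s hl, compLen, Multiset.map_coe, Multiset.sum_coe, List.map_map]
  rfl

lemma moment_compMS_le (p : ℕ) {l : ℕ} (hl : 1 ≤ l) :
    moment p l (compMS s) ≤ s.length ^ (p + 1) := by
  rw [moment_compMS p hl, pow_succ']
  calc _ ≤ (range (s.length + 1 - l)).card • s.length ^ p :=
        sum_le_card_nsmul _ _ _ fun i _ => Nat.pow_le_pow_left
          ((List.count_le_length).trans (by simp)) p
    _ ≤ _ := by simp only [card_range, smul_eq_mul]; gcongr; omega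

lemma moment_compMS_sub {n m : ℕ} (p : ℕ) (hn : s.length = n) (hm : m < n) :
    (moment p (n - m) (compMS s) : ℤ) =
      ∑ a ∈ range (m + 1), (s.count true - prefixOnes s a - suffixOnes s (m - a)) ^ p := by
  subst hn
  rw [moment_compMS p (by omega), show s.length + 1 - (s.length - m) = m + 1 by omega]
  push_cast
  exact sum_congr rfl fun a ha => by rw [count_window hm.le (by simp at ha; omega)]

end Moments

lemma OneErr.exists_lenPart_eq {M M' : Multiset (ℕ × ℕ)} (h : OneErr M M') :
    ∃ c, ∀ l ≠ c, lenPart l M' = lenPart l M := by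
  obtain ⟨z, w, z', w', -, hzw, rfl⟩ := h
  refine ⟨z + w, fun l hl => ?_⟩
  simp only [lenPart, Multiset.filter_add, Multiset.filter_sub, Multiset.filter_singleton]
  simp [hl.symm, ← hzw]

lemma AtMostErr.exists_lenPart_eq {t : ℕ} {M D : Multiset (ℕ × ℕ)} (h : AtMostErr t M D) :
    ∃ S : Finset ℕ, #S ≤ t ∧ ∀ l ∉ S, lenPart l M = lenPart l D := by
  induction t generalizing M with
  | zero => exact ⟨∅, by simp, fun l _ => by rw [show M = D from h]⟩
  | succ t ih =>
    rcases h with rfl | ⟨M', h₁, h₂⟩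
    · exact ⟨∅, by simp, fun _ _ => rfl⟩
    obtain ⟨S, hS, hSl⟩ := ih h₂
    obtain ⟨c, hc⟩ := h₁.exists_lenPart_eq
    refine ⟨insert c S, (card_insert_le _ _).trans (by omega), fun l hl => ?_⟩
    rw [mem_insert, not_or] at hl
    rw [← hc l hl.1, hSl l hl.2]

lemma eq_of_add_eq_of_sq_add_sq_eq {x y x' y' : ℤ} (hxy : x ≤ y) (hxy' : x' ≤ y')
    (h₁ : x + y = x' + y') (h₂ : x ^ 2 + y ^ 2 = x' ^ 2 + y' ^ 2) : x = x' ∧ y = y' := by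
  have hsq : (y - x) ^ 2 = (y' - x') ^ 2 := by
    linear_combination 2 * h₂ - (x + y + x' + y') * h₁
  have := (sq_eq_sq₀ (by linarith) (by linarith)).mp hsq
  constructor <;> linarith

lemma add_endpoints_eq_of_sum_range_eq {M : Type*} [AddCancelCommMonoid M] {m : ℕ}
    {f g : ℕ → M} (hm : 1 ≤ m) (hsum : ∑ a ∈ range (m + 1), f a = ∑ a ∈ range (m + 1), g a)
    (hmid : ∀ a, 0 < a → a < m → f a = g a) : f 0 + f m = g 0 + g m := by
  obtain ⟨k, rfl⟩ : ∃ k, m = k + 1 := ⟨m - 1, by omega⟩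
  rw [sum_range_succ, sum_range_succ', sum_range_succ, sum_range_succ',
    sum_congr rfl fun a ha => hmid (a + 1) (by omega) (by simp at ha; omega)] at hsum
  refine add_right_cancel (b := ∑ a ∈ range k, g (a + 1)) ?_
  calc _ = ∑ a ∈ range k, g (a + 1) + f 0 + f (k + 1) := by ac_rfl
    _ = _ := hsum
    _ = _ := by ac_rfl

def Dominant (s : List Bool) : Prop := ∀ m ≤ s.length, suffixOnes s m ≤ prefixOnes s m

lemma dominant_of_forall_two_mul_le {s : List Bool}
    (h : ∀ m, 2 * m ≤ s.length → suffixOnes s m ≤ prefixOnes s m) : Dominant s := by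
  intro m hm
  rcases le_total (2 * m) s.length with hle | hle
  · exact h m hle
  · have h₁ := prefixOnes_add_suffixOnes (s := s) m
    have h₂ := prefixOnes_add_suffixOnes (s := s) (s.length - m)
    rw [Nat.sub_sub_self hm] at h₂
    linarith [h (s.length - m) (by omega)]

/-- Strong induction on `m`: given the shorter prefixes and suffixes, the moments of the windows of
length `n - m` fix the sum and the sum of squares of the two extreme windows, and dominance orders
them. -/
lemma prefixOnes_suffixOnes_eq_of_moment_eq {s v : List Bool} (hlen : s.length = v.length)
    (hs : Dominant s) (hv : Dominant v)
    (hmom : ∀ p ∈ ({1, 2} : Finset ℕ), ∀ l ∈ Icc 1 s.length,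
      moment p l (compMS s) = moment p l (compMS v)) (hpos : 0 < s.length) (m : ℕ) :
    prefixOnes s m = prefixOnes v m ∧ suffixOnes s m = suffixOnes v m := by
  have hmom' (p : ℕ) (hp : p ∈ ({1, 2} : Finset ℕ)) {m : ℕ} (hm : m < s.length) :
      ∑ a ∈ range (m + 1), (s.count true - prefixOnes s a - suffixOnes s (m - a) : ℤ) ^ p
        = ∑ a ∈ range (m + 1), (v.count true - prefixOnes v a - suffixOnes v (m - a)) ^ p := by
    rw [← moment_compMS_sub p rfl hm, ← moment_compMS_sub p hlen.symm hm,
      hmom p hp (s.length - m) (by simp; omega)]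
  have hw : (s.count true : ℤ) = v.count true := by
    simpa [prefixOnes_zero, suffixOnes_zero] using hmom' 1 (by simp) hpos
  induction m using Nat.strong_induction_on with
  | _ m ih =>
  rcases lt_or_ge m s.length with hm | hm
  swap
  · rw [prefixOnes_of_length_le hm, prefixOnes_of_length_le (hlen ▸ hm),
      suffixOnes_of_length_le hm, suffixOnes_of_length_le (hlen ▸ hm)]
    exact ⟨hw, hw⟩
  rcases Nat.eq_zero_or_pos m with rfl | hm0
  · simp [prefixOnes_zero, suffixOnes_zero]
  set w := (s.count true : ℤ)
  have hends : ∀ p ∈ ({1, 2} : Finset ℕ),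
      (w - suffixOnes s m) ^ p + (w - prefixOnes s m) ^ p
        = (w - suffixOnes v m) ^ p + (w - prefixOnes v m) ^ p := fun p hp => by
    have h := hmom' p hp hm
    rw [← hw] at h
    simpa [prefixOnes_zero, suffixOnes_zero] using
      add_endpoints_eq_of_sum_range_eq hm0 h fun a ha ham => by
        rw [(ih a ham).1, (ih (m - a) (by omega)).2]
  have h₁ := hends 1 (by simp)
  have h₂ := hends 2 (by simp)
  obtain ⟨hP, hS⟩ := eq_of_add_eq_of_sq_add_sq_eq (x := w - prefixOnes s m)
    (y := w - suffixOnes s m) (x' := w - prefixOnes v m) (y' := w - suffixOnes v m)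
    (by linarith [hs m hm.le]) (by linarith [hv m (by omega)]) (by linarith) (by linarith)
  exact ⟨by linarith, by linarith⟩

theorem eq_of_moment_eq {s v : List Bool} (hlen : s.length = v.length)
    (hs : Dominant s) (hv : Dominant v)
    (hmom : ∀ p ∈ ({1, 2} : Finset ℕ), ∀ l ∈ Icc 1 s.length,
      moment p l (compMS s) = moment p l (compMS v)) : s = v := by
  rcases Nat.eq_zero_or_pos s.length with h0 | hpos
  · rw [List.length_eq_zero_iff.mp h0, List.length_eq_zero_iff.mp (show v.length = 0 by omega)]
  exact eq_of_prefixOnes_eq hlen fun m =>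
    (prefixOnes_suffixOnes_eq_of_moment_eq hlen hs hv hmom hpos m).1

section PowerSums

variable {R ι : Type*} [CommRing R] [IsDomain R]

lemma eq_zero_of_sum_mul_pow_eq_zero {T : Finset ι} {x : ι → R} (hx : Set.InjOn x T)
    {e : ι → R} (h : ∀ j < #T, ∑ i ∈ T, e i * x i ^ j = 0) : ∀ i ∈ T, e i = 0 := by
  set σ := T.equivFin
  have hinj : Function.Injective fun k => x (σ.symm k) := fun k k' hk =>
    σ.symm.injective (Subtype.ext (hx (σ.symm k).2 (σ.symm k').2 hk))
  have hzero := Matrix.eq_zero_of_forall_pow_sum_mul_pow_eq_zero (v := fun k => e (σ.symm k))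
    hinj fun j => by rw [← h j j.2, ← sum_coe_sort T, ← σ.symm.sum_comp]
  intro i hi
  simpa using congrFun hzero (σ ⟨i, hi⟩)

lemma eqOn_of_sum_mul_pow_eq {I S : Finset ι} {x : ι → R} (hx : Set.InjOn x I) {f g : ι → R}
    (hS : ∀ i ∈ I, i ∉ S → f i = g i)
    (h : ∀ j < #S, ∑ i ∈ I, f i * x i ^ j = ∑ i ∈ I, g i * x i ^ j) : ∀ i ∈ I, f i = g i := by
  classical
  set T := I.filter (· ∈ S)
  have hT : ∀ i ∈ T, f i - g i = 0 := by
    refine eq_zero_of_sum_mul_pow_eq_zero (hx.mono (filter_subset _ _)) fun j hj => ?_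
    have hTS : #T ≤ #S := card_le_card fun i hi => (mem_filter.mp hi).2
    rw [sum_filter_of_ne fun i hi hne => ?_]
    · simp only [sub_mul, sum_sub_distrib, h j (hj.trans_le hTS), sub_self]
    · by_contra hiS
      exact hne (by rw [hS i hi hiS, sub_self, zero_mul])
  intro i hi
  by_cases hiS : i ∈ S
  · exact sub_eq_zero.mp (hT i (mem_filter.mpr ⟨hi, hiS⟩))
  · exact hS i hi hiS

end PowerSums

def syndrome (t : ℕ) (s : List Bool) (pj : ({1, 2} : Finset ℕ) × Fin (2 * t)) : ℕ :=
  ∑ l ∈ Icc 1 s.length, moment pj.1 l (compMS s) * l ^ (pj.2 : ℕ)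

theorem eq_of_syndrome_eq_of_atMostErr {t : ℕ} {s v : List Bool} {D : Multiset (ℕ × ℕ)}
    (hlen : s.length = v.length) (hs : Dominant s) (hv : Dominant v)
    (hsyn : syndrome t s = syndrome t v)
    (hsD : AtMostErr t (compMS s) D) (hvD : AtMostErr t (compMS v) D) : s = v := by
  obtain ⟨S₁, hS₁, h₁⟩ := hsD.exists_lenPart_eq
  obtain ⟨S₂, hS₂, h₂⟩ := hvD.exists_lenPart_eq
  refine eq_of_moment_eq hlen hs hv fun p hp l hl => ?_
  have hoff : ∀ l ∈ Icc 1 s.length, l ∉ S₁ ∪ S₂ →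
      (moment p l (compMS s) : ℤ) = moment p l (compMS v) := fun l _ hl => by
    rw [mem_union, not_or] at hl
    simp only [moment, h₁ l hl.1, h₂ l hl.2]
  have hpow : ∀ j < #(S₁ ∪ S₂), ∑ l ∈ Icc 1 s.length, (moment p l (compMS s) : ℤ) * l ^ j
      = ∑ l ∈ Icc 1 s.length, (moment p l (compMS v) : ℤ) * l ^ j := fun j hj => by
    have hj' : j < 2 * t := hj.trans_le ((card_union_le _ _).trans (by omega))
    have := congrFun hsyn (⟨p, hp⟩, ⟨j, hj'⟩)
    simp only [syndrome, ← hlen] at this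
    exact_mod_cast this
  exact_mod_cast eqOn_of_sum_mul_pow_eq Nat.cast_injective.injOn hoff hpow l hl

/-- The final height of the pairs `(sᵢ, s_{n+1-i})` of a string read as a walk with steps in
`{-1, 0, 1}`. -/
def excess (P : List (Bool × Bool)) : ℤ :=
  (P.map Prod.fst).count true - (P.map Prod.snd).count true

def PrefixesNonneg (P : List (Bool × Bool)) : Prop := ∀ m, 0 ≤ excess (P.take m)

lemma excess_append (P Q : List (Bool × Bool)) : excess (P ++ Q) = excess P + excess Q := by
  simp only [excess, List.map_append, List.count_append]
  push_cast
  ring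

lemma excess_take_add (P : List (Bool × Bool)) (a b : ℕ) :
    excess (P.take (a + b)) = excess (P.take a) + excess ((P.drop a).take b) := by
  rw [List.take_add, excess_append]

lemma excess_swap (P : List (Bool × Bool)) : excess (P.map Prod.swap) = -excess P := by
  simp [excess, List.map_map, Function.comp_def]

/-- The cycle lemma: rotating a walk of nonnegative height to start at a lowest point makes all
its prefixes nonnegative. -/
lemma exists_rotate_prefixesNonneg {P : List (Bool × Bool)} (hP : 0 ≤ excess P) :
    ∃ τ ≤ P.length, PrefixesNonneg (P.rotate τ) := by
  obtain ⟨τ, hτ, hmin⟩ := exists_min_image (range (P.length + 1)) (fun m => excess (P.take m))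
    nonempty_range_add_one
  rw [mem_range, Nat.lt_succ_iff] at hτ
  have hmin' : ∀ m, excess (P.take τ) ≤ excess (P.take m) := fun m => by
    rcases le_or_gt m P.length with hm | hm
    · exact hmin m (mem_range.mpr (by omega))
    · simpa [List.take_of_length_le hm.le] using hmin P.length (by simp)
  refine ⟨τ, hτ, fun m => ?_⟩
  rw [List.rotate_eq_drop_append_take hτ, List.take_append, excess_append, List.take_take]
  have h := excess_take_add P τ m
  rcases Nat.eq_zero_or_pos (m - (P.drop τ).length) with h0 | hpos
  · simp only [h0, Nat.zero_min, List.take_zero]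
    linarith [hmin' (τ + m), show excess ([] : List (Bool × Bool)) = 0 from rfl]
  · rw [List.length_drop] at hpos
    rw [List.take_of_length_le (l := P) (show P.length ≤ τ + m by omega)] at h
    linarith [hmin' (min (m - (P.drop τ).length) τ)]

def walks (N : ℕ) : Finset (List (Bool × Bool)) :=
  (univ : Finset (Fin N → Bool × Bool)).image List.ofFn

lemma mem_walks {N : ℕ} {P : List (Bool × Bool)} : P ∈ walks N ↔ P.length = N := by
  simp only [walks, mem_image, mem_univ, true_and]
  exact ⟨by rintro ⟨f, rfl⟩; simp, fun h => ⟨fun i => P[i], by subst h; exact List.ofFn_getElem⟩⟩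

lemma card_walks (N : ℕ) : #(walks N) = 4 ^ N := by
  simp [walks, card_image_of_injective _ List.ofFn_injective]

lemma card_walks_le_two_mul_card_excess_nonneg (N : ℕ) :
    4 ^ N ≤ 2 * #{P ∈ walks N | 0 ≤ excess P} := by
  have hneg : #{P ∈ walks N | ¬ 0 ≤ excess P} ≤ #{P ∈ walks N | 0 ≤ excess P} := by
    refine card_le_card_of_injOn (List.map Prod.swap) (fun P hP => ?_) ?_
    · simp only [coe_filter, Set.mem_ofPred_eq, mem_walks] at hP ⊢
      simp [hP.1, excess_swap]
      linarith [hP.2]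
    · intro P _ Q _ h
      simpa using congrArg (List.map Prod.swap) h
  rw [← card_walks, ← card_filter_add_card_filter_not (fun P => 0 ≤ excess P)]
  omega

open Classical in
lemma card_walks_le (N : ℕ) : 4 ^ N ≤ 2 * (N + 1) * #{P ∈ walks N | PrefixesNonneg P} := by
  have hsub : {P ∈ walks N | 0 ≤ excess P} ⊆
      ({P ∈ walks N | PrefixesNonneg P} ×ˢ range (N + 1)).image
        fun Qi : List (Bool × Bool) × ℕ => Qi.1.rotate Qi.2 := by
    intro P hP
    rw [mem_filter, mem_walks] at hP
    obtain ⟨τ, hτ, hgood⟩ := exists_rotate_prefixesNonneg hP.2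
    refine mem_image.mpr ⟨(P.rotate τ, N - τ), ?_, ?_⟩
    · simp [mem_walks, hP.1, hgood]
    · rw [List.rotate_rotate, ← hP.1, Nat.add_sub_cancel' hτ, List.rotate_length]
  calc 4 ^ N ≤ 2 * #{P ∈ walks N | 0 ≤ excess P} := card_walks_le_two_mul_card_excess_nonneg N
    _ ≤ 2 * ((N + 1) * #{P ∈ walks N | PrefixesNonneg P}) := by
      gcongr
      exact (card_le_card hsub).trans
        (card_image_le.trans (by rw [card_product, card_range, mul_comm]))
    _ = _ := by ring

def ofPairs (P : List (Bool × Bool)) : List Bool := P.map Prod.fst ++ (P.map Prod.snd).reverse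

section OfPairs

variable {P : List (Bool × Bool)}

lemma length_ofPairs : (ofPairs P).length = 2 * P.length := by
  simp [ofPairs]; ring

lemma ofPairs_injective : Function.Injective ofPairs := by
  intro P Q h
  have hlen : P.length = Q.length := by
    have := congrArg List.length h
    rw [length_ofPairs, length_ofPairs] at this
    omega
  obtain ⟨h₁, h₂⟩ := List.append_inj h (by simp [hlen])
  rw [← List.zip_unzip P, ← List.zip_unzip Q, List.unzip_eq_map, List.unzip_eq_map, h₁,
    List.reverse_inj.mp h₂]

lemma prefixOnes_ofPairs {m : ℕ} (hm : m ≤ P.length) :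
    prefixOnes (ofPairs P) m = ((P.take m).map Prod.fst).count true := by
  rw [prefixOnes, ofPairs, List.take_append_of_le_length (by simpa using hm), List.map_take]

lemma suffixOnes_ofPairs {m : ℕ} (hm : m ≤ P.length) :
    suffixOnes (ofPairs P) m = ((P.take m).map Prod.snd).count true := by
  rw [suffixOnes, length_ofPairs, ofPairs,
    show 2 * P.length - m = (P.map Prod.fst).length + (P.length - m) by simp; omega,
    List.drop_length_add_append, List.drop_reverse, List.count_reverse, List.length_map,
    Nat.sub_sub_self hm, List.map_take]

lemma dominant_ofPairs (h : PrefixesNonneg P) : Dominant (ofPairs P) :=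
  dominant_of_forall_two_mul_le fun m hm => by
    rw [length_ofPairs] at hm
    have := h m
    rw [excess] at this
    rw [prefixOnes_ofPairs (by omega), suffixOnes_ofPairs (by omega)]
    linarith

end OfPairs

theorem exists_dominant_finset (N : ℕ) :
    ∃ F : Finset (List Bool), (∀ s ∈ F, s.length = 2 * N ∧ Dominant s) ∧
      4 ^ N ≤ 2 * (N + 1) * #F := by
  classical
  refine ⟨{P ∈ walks N | PrefixesNonneg P}.image ofPairs, fun s hs => ?_, ?_⟩
  · obtain ⟨P, hP, rfl⟩ := mem_image.mp hs
    rw [mem_filter, mem_walks] at hP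
    exact ⟨by rw [length_ofPairs, hP.1], dominant_ofPairs hP.2⟩
  · rw [card_image_of_injective _ ofPairs_injective]
    convert card_walks_le N

lemma syndrome_le (t : ℕ) (s : List Bool) (pj : ({1, 2} : Finset ℕ) × Fin (2 * t)) :
    syndrome t s pj ≤ s.length ^ (2 * t + 3) := by
  obtain ⟨⟨p, hp⟩, j, hj⟩ := pj
  have hp2 : p + 1 ≤ 3 := by simp at hp; omega
  rcases Nat.eq_zero_or_pos s.length with h0 | hpos
  · simp [syndrome, h0]
  calc syndrome t s (⟨p, hp⟩, ⟨j, hj⟩)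
      ≤ ∑ _l ∈ Icc 1 s.length, s.length ^ 3 * s.length ^ j :=
        sum_le_sum fun l hl => Nat.mul_le_mul
          ((moment_compMS_le p (mem_Icc.mp hl).1).trans (Nat.pow_le_pow_right hpos hp2))
          (Nat.pow_le_pow_left (mem_Icc.mp hl).2 j)
    _ = s.length ^ (j + 4) := by simp; ring
    _ ≤ s.length ^ (2 * t + 3) := Nat.pow_le_pow_right hpos (by omega)

/-- Among the dominant strings of length `2N`, the most popular syndrome class is a code. -/
theorem exists_code {t N k : ℕ}
    (hk : 2 * (N + 1) * ((2 * N) ^ (2 * t + 3) + 1) ^ (4 * t) * 2 ^ k ≤ 4 ^ N) :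
    ∃ C : Set (List Bool), (∀ s ∈ C, s.length = 2 * N) ∧ 2 ^ k ≤ C.ncard ∧
      ∀ s ∈ C, ∀ v ∈ C, s ≠ v →
        ¬ ∃ D, AtMostErr t (compMS s) D ∧ AtMostErr t (compMS v) D := by
  classical
  obtain ⟨F, hF, hcard⟩ := exists_dominant_finset N
  set M := (2 * N) ^ (2 * t + 3) + 1
  set target := Fintype.piFinset fun _ : ({1, 2} : Finset ℕ) × Fin (2 * t) => range M
  have hmaps : ∀ s ∈ F, syndrome t s ∈ target := fun s hs => by
    simp only [target, Fintype.mem_piFinset, mem_range]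
    exact fun pj => Nat.lt_succ_of_le ((hF s hs).1 ▸ syndrome_le t s pj)
  have htarget : #target = M ^ (4 * t) := by
    simp [target, Fintype.card_piFinset]; ring
  have hpigeon : #target * 2 ^ k ≤ #F := by
    rw [htarget]
    refine Nat.le_of_mul_le_mul_left ?_ (show 0 < 2 * (N + 1) by omega)
    linarith
  obtain ⟨y, -, hy⟩ := exists_le_card_fiber_of_mul_le_card_of_maps_to hmaps
    ⟨fun _ => 0, by simp [target, M]⟩ hpigeon
  refine ⟨↑{s ∈ F | syndrome t s = y}, fun s hs => (hF s (mem_filter.mp hs).1).1, ?_, ?_⟩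
  · rwa [Set.ncard_coe_finset]
  · rintro s hs v hv hne ⟨D, hsD, hvD⟩
    rw [coe_filter] at hs hv
    exact hne (eq_of_syndrome_eq_of_atMostErr (by rw [(hF s hs.1).1, (hF v hv.1).1])
      (hF s hs.1).2 (hF v hv.1).2 (hs.2.trans hv.2.symm) hsD hvD)

lemma mul_self_le_two_pow {L : ℕ} (hL : 4 ≤ L) : L * L ≤ 2 ^ L := by
  induction L, hL using Nat.le_induction with
  | base => norm_num
  | succ L hL ih => rw [pow_succ]; nlinarith

lemma exists_half_length_le_add_log {t k : ℕ} (ht : 1 ≤ t) (hk : 2 ^ (64 * t ^ 2) ≤ k) :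
    ∃ N, 2 * N ≤ k + 80 * t ^ 2 * Nat.log 2 k ∧
      2 * (N + 1) * ((2 * N) ^ (2 * t + 3) + 1) ^ (4 * t) * 2 ^ k ≤ 4 ^ N := by
  have htL : 64 * t ^ 2 ≤ Nat.log 2 k := Nat.le_log_of_pow_le one_lt_two hk
  have hkL : k < 2 * 2 ^ Nat.log 2 k := by
    rw [← pow_succ']; exact Nat.lt_pow_succ_log_self one_lt_two k
  generalize Nat.log 2 k = L at htL hkL ⊢
  have ht2 : 1 ≤ t ^ 2 := Nat.one_le_pow _ _ ht
  have hLL : L * L ≤ 2 ^ L := mul_self_le_two_pow (by omega)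
  have hLB : 64 * t ^ 2 * (L + 2) ≤ L * (L + 2) := Nat.mul_le_mul_right _ htL
  obtain ⟨N, hN⟩ : ∃ N, k + 26 * t ^ 2 * (L + 2) ≤ 2 * N ∧ 2 * N ≤ k + 26 * t ^ 2 * (L + 2) + 1 :=
    ⟨(k + 26 * t ^ 2 * (L + 2) + 1) / 2, by omega⟩
  refine ⟨N, by nlinarith, ?_⟩
  have hn : 2 ≤ 2 * N := by nlinarith
  have hnL : 2 * N ≤ 2 ^ (L + 2) := by rw [pow_add]; nlinarith
  have hM : (2 * N) ^ (2 * t + 3) + 1 ≤ (2 * N) ^ (2 * t + 4) := by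
    rw [pow_succ _ (2 * t + 3)]
    nlinarith [Nat.one_le_pow (2 * t + 3) (2 * N) (by omega)]
  calc 2 * (N + 1) * ((2 * N) ^ (2 * t + 3) + 1) ^ (4 * t) * 2 ^ k
      ≤ (2 * N) ^ 2 * ((2 * N) ^ (2 * t + 4)) ^ (4 * t) * 2 ^ k := by gcongr; nlinarith
    _ = (2 * N) ^ (2 + (2 * t + 4) * (4 * t)) * 2 ^ k := by rw [← pow_mul, ← pow_add]
    _ ≤ (2 * N) ^ (26 * t ^ 2) * 2 ^ k := by gcongr <;> nlinarith
    _ ≤ (2 ^ (L + 2)) ^ (26 * t ^ 2) * 2 ^ k := by gcongr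
    _ = 2 ^ ((L + 2) * (26 * t ^ 2) + k) := by rw [← pow_mul, ← pow_add]
    _ ≤ 2 ^ (2 * N) := Nat.pow_le_pow_right two_pos (by nlinarith)
    _ = 4 ^ N := by rw [pow_mul]; norm_num

/-- There is an absolute constant `c > 0` such that for every `t ≥ 1`
there is `k₀(t)` such that for all `k ≥ k₀(t)` there exist `n ≤ k + c·t²·log₂ k` and a
code `C ⊆ {0,1}ⁿ` with `|C| ≥ 2^k` correcting any `t` (symmetric) composition errors. -/
theorem symmetric_t_error_code_exists :
    ∃ c : ℝ, 0 < c ∧ ∀ t : ℕ, 1 ≤ t → ∃ k₀ : ℕ, ∀ k : ℕ, k₀ ≤ k →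
      ∃ n : ℕ, (n : ℝ) ≤ (k : ℝ) + c * (t : ℝ) ^ 2 * Real.logb 2 (k : ℝ) ∧
        ∃ C : Set (List Bool),
          (∀ s ∈ C, s.length = n) ∧
          2 ^ k ≤ C.ncard ∧
          (∀ s ∈ C, ∀ v ∈ C, s ≠ v →
            ¬ ∃ D : Multiset (ℕ × ℕ),
              AtMostErr t (compMS s) D ∧ AtMostErr t (compMS v) D) := by
  refine ⟨80, by norm_num, fun t ht => ⟨2 ^ (64 * t ^ 2), fun k hk => ?_⟩⟩
  obtain ⟨N, hNk, hcount⟩ := exists_half_length_le_add_log ht hk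
  refine ⟨2 * N, ?_, exists_code hcount⟩
  calc ((2 * N : ℕ) : ℝ) ≤ k + 80 * t ^ 2 * (Nat.log 2 k : ℕ) := by exact_mod_cast hNk
    _ ≤ k + 80 * t ^ 2 * Real.logb 2 k := by
      gcongr
      exact_mod_cast Real.natLog_le_logb k 2
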